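/- The Grigorchuk group self-similar action on X = {x,y} is contracting with nucleus 𝒩 = {e, a, b, c, d}: for every g ∈ G there is n such that g|_v ∈ {e,a,b,c,d} for all words v with |v| ≥ n. -/

import Mathlib

/-- The generator `a` of the Grigorchuk group, acting on words over `X = {x,y}`
(encoded as `Bool` with `x = false`, `y = true`): `a·(xw) = yw`, `a·(yw) = xw`. -/
def grigA : List Bool → List Bool
  | [] => []
  | x :: w => (!x) :: w

mutual
/-- The generator `b`: `b·(xw) = x(a·w)`, `b·(yw) = y(c·w)`. -/
def grigB : List Bool → List Bool
  | [] => []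
  | false :: w => false :: grigA w
  | true :: w => true :: grigC w
/-- The generator `c`: `c·(xw) = x(a·w)`, `c·(yw) = y(d·w)`. -/
def grigC : List Bool → List Bool
  | [] => []
  | false :: w => false :: grigA w
  | true :: w => true :: grigD w
/-- The generator `d`: `d·(xw) = xw`, `d·(yw) = y(b·w)`. -/
def grigD : List Bool → List Bool
  | [] => []
  | false :: w => false :: w
  | true :: w => true :: grigB w
end

/-- The restriction `f|_x` of a (length- and prefix-preserving) transformation of words:
`f|_x (w)` is the tail of `f (x :: w)`. -/
def restr (f : List Bool → List Bool) (x : Bool) : List Bool → List Bool :=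
  fun w => (f (x :: w)).tail

/-- The restriction `f|_v` of a transformation of words to a word `v`. -/
def restrW : (List Bool → List Bool) → List Bool → (List Bool → List Bool)
  | f, [] => f
  | f, x :: v => restrW (restr f x) v

/-! Restriction is compatible with composition: `(f ∘ g)|_v = f|_{g v} ∘ g|_v`, and `g v` has
the length of `v`. Hence if all restrictions of `f` and of `g` to words of length `≥ k` lie in
`𝒩`, then every restriction of `f ∘ g` to a word of length `> k` is a restriction of some
`p ∘ q` with `p, q ∈ 𝒩` to a nonempty word. Such a restriction lies in `𝒩` again: `a` changes
only the first letter and `a|_x = e`, while `{e, b, c, d}` is a Klein four-group whose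
restrictions lie in `𝒩`. Induction over words in the generators finishes the proof. -/

theorem restrW_append (f : List Bool → List Bool) (u v : List Bool) :
    restrW f (u ++ v) = restrW (restrW f u) v := by
  induction u generalizing f with
  | nil => rfl
  | cons x u ih => exact ih (restr f x)

theorem restrW_apply (f : List Bool → List Bool) (v w : List Bool) :
    restrW f v w = (f (v ++ w)).drop v.length := by
  induction v generalizing f with
  | nil => rfl
  | cons x v ih =>
    simp only [restrW, ih, restr, List.drop_tail, List.cons_append, List.length_cons]

def binaryTreeEnd : Submonoid (Function.End (List Bool)) where
  carrier := {f | (∀ v, (f v).length = v.length) ∧ ∀ v w, f v <+: f (v ++ w)}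
  one_mem' := ⟨fun _ => rfl, fun _ _ => List.prefix_append _ _⟩
  mul_mem' := by
    rintro f g ⟨hf_len, hf_pre⟩ ⟨hg_len, hg_pre⟩
    refine ⟨fun v => (hf_len _).trans (hg_len v), fun v w => ?_⟩
    obtain ⟨r, hr⟩ := hg_pre v w
    show f (g v) <+: f (g (v ++ w))
    rw [← hr]
    exact hf_pre _ _

theorem restrW_comp {g : List Bool → List Bool} (hg : g ∈ binaryTreeEnd)
    (f : List Bool → List Bool) (v : List Bool) :
    restrW (f ∘ g) v = restrW f (g v) ∘ restrW g v := by
  funext w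
  have hsplit : g (v ++ w) = g v ++ restrW g v w := by
    rw [restrW_apply, ← hg.1 v]
    exact (List.prefix_iff_eq_append.mp (hg.2 v w)).symm
  rw [Function.comp_apply, restrW_apply, restrW_apply, Function.comp_apply, hsplit, hg.1 v]

theorem grigA_mem_binaryTreeEnd : grigA ∈ binaryTreeEnd := by
  refine ⟨fun v => ?_, fun v w => ?_⟩ <;> cases v <;> simp [grigA]

theorem grigBCD_mem_binaryTreeEnd :
    grigB ∈ binaryTreeEnd ∧ grigC ∈ binaryTreeEnd ∧ grigD ∈ binaryTreeEnd := by
  have hA := grigA_mem_binaryTreeEnd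
  have hlen : ∀ v, (grigB v).length = v.length ∧ (grigC v).length = v.length ∧
      (grigD v).length = v.length := by
    intro v
    induction v with
    | nil => simp [grigB, grigC, grigD]
    | cons x v ih => cases x <;> simp [grigB, grigC, grigD, hA.1, ih]
  have hpre : ∀ v w, grigB v <+: grigB (v ++ w) ∧ grigC v <+: grigC (v ++ w) ∧
      grigD v <+: grigD (v ++ w) := by
    intro v w
    induction v with
    | nil => simp [grigB, grigC, grigD]
    | cons x v ih => cases x <;> simp [grigB, grigC, grigD, hA.2, ih]
  exact ⟨⟨fun v => (hlen v).1, fun v w => (hpre v w).1⟩,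
    ⟨fun v => (hlen v).2.1, fun v w => (hpre v w).2.1⟩,
    ⟨fun v => (hlen v).2.2, fun v w => (hpre v w).2.2⟩⟩

theorem closure_grig_le_binaryTreeEnd :
    Submonoid.closure ({grigA, grigB, grigC, grigD} : Set (Function.End (List Bool))) ≤
      binaryTreeEnd := by
  obtain ⟨hB, hC, hD⟩ := grigBCD_mem_binaryTreeEnd
  rw [Submonoid.closure_le]
  rintro f (rfl | rfl | rfl | rfl)
  exacts [grigA_mem_binaryTreeEnd, hB, hC, hD]

def EventuallyRestrIn (N : Set (List Bool → List Bool)) (f : List Bool → List Bool) : Prop :=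
  ∃ n : ℕ, ∀ v : List Bool, n ≤ v.length → restrW f v ∈ N

theorem EventuallyRestrIn.mul {N : Set (List Bool → List Bool)}
    (hN : ∀ p ∈ N, ∀ q ∈ N, ∀ v ≠ [], restrW (p ∘ q) v ∈ N)
    {f g : List Bool → List Bool} (hf : EventuallyRestrIn N f)
    (hg_tree : g ∈ binaryTreeEnd) (hg : EventuallyRestrIn N g) :
    EventuallyRestrIn N (f ∘ g) := by
  obtain ⟨m, hm⟩ := hf
  obtain ⟨n, hn⟩ := hg
  -- restrict to a prefix on which both factors have reached `N`, then to the nonempty rest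
  refine ⟨max m n + 1, fun v hv => ?_⟩
  have htake : (v.take (max m n)).length = max m n := List.length_take_of_le (by omega)
  have hdrop : v.drop (max m n) ≠ [] := by
    rw [← List.length_pos_iff, List.length_drop]
    omega
  rw [← List.take_append_drop (max m n) v, restrW_append, restrW_comp hg_tree]
  refine hN _ (hm _ ?_) _ (hn _ ?_) _ hdrop
  · rw [hg_tree.1, htake]
    exact le_max_left m n
  · rw [htake]
    exact le_max_right m n

def grigKleinFour : Set (List Bool → List Bool) := {id, grigB, grigC, grigD}

def grigNucleus : Set (List Bool → List Bool) := {id, grigA, grigB, grigC, grigD}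

theorem grigA_grigA (w : List Bool) : grigA (grigA w) = w := by
  cases w <;> simp [grigA]

theorem tail_grigA (w : List Bool) : (grigA w).tail = w.tail := by
  cases w <;> rfl

theorem grigBCD_comp_self : grigB ∘ grigB = id ∧ grigC ∘ grigC = id ∧ grigD ∘ grigD = id := by
  suffices h : ∀ w, grigB (grigB w) = w ∧ grigC (grigC w) = w ∧ grigD (grigD w) = w from
    ⟨funext fun w => (h w).1, funext fun w => (h w).2.1, funext fun w => (h w).2.2⟩
  intro w
  induction w with
  | nil => simp [grigB, grigC, grigD]
  | cons x w ih => cases x <;> simp [grigB, grigC, grigD, grigA_grigA, ih]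

theorem grigBCD_comp_cyclic :
    grigB ∘ grigC = grigD ∧ grigC ∘ grigD = grigB ∧ grigD ∘ grigB = grigC := by
  suffices h : ∀ w, grigB (grigC w) = grigD w ∧ grigC (grigD w) = grigB w ∧
      grigD (grigB w) = grigC w from
    ⟨funext fun w => (h w).1, funext fun w => (h w).2.1, funext fun w => (h w).2.2⟩
  intro w
  induction w with
  | nil => simp [grigB, grigC, grigD]
  | cons x w ih => cases x <;> simp [grigB, grigC, grigD, grigA_grigA, ih]

theorem grigBCD_comp_anticyclic :
    grigC ∘ grigB = grigD ∧ grigD ∘ grigC = grigB ∧ grigB ∘ grigD = grigC := by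
  suffices h : ∀ w, grigC (grigB w) = grigD w ∧ grigD (grigC w) = grigB w ∧
      grigB (grigD w) = grigC w from
    ⟨funext fun w => (h w).1, funext fun w => (h w).2.1, funext fun w => (h w).2.2⟩
  intro w
  induction w with
  | nil => simp [grigB, grigC, grigD]
  | cons x w ih => cases x <;> simp [grigB, grigC, grigD, grigA_grigA, ih]

theorem comp_mem_grigKleinFour {p q : List Bool → List Bool} (hp : p ∈ grigKleinFour)
    (hq : q ∈ grigKleinFour) : p ∘ q ∈ grigKleinFour := by
  obtain ⟨hbb, hcc, hdd⟩ := grigBCD_comp_self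
  obtain ⟨hbc, hcd, hdb⟩ := grigBCD_comp_cyclic
  obtain ⟨hcb, hdc, hbd⟩ := grigBCD_comp_anticyclic
  rcases hp with rfl | rfl | rfl | rfl <;> rcases hq with rfl | rfl | rfl | rfl <;>
    simp [grigKleinFour, hbb, hcc, hdd, hbc, hcd, hdb, hcb, hdc, hbd]

theorem restr_id (x : Bool) : restr id x = id := rfl

theorem restr_grigA (x : Bool) : restr grigA x = id := rfl

theorem restr_grigB (x : Bool) : restr grigB x = cond x grigC grigA := by
  cases x <;> rfl

theorem restr_grigC (x : Bool) : restr grigC x = cond x grigD grigA := by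
  cases x <;> rfl

theorem restr_grigD (x : Bool) : restr grigD x = cond x grigB id := by
  cases x <;> rfl

theorem restr_mem_grigNucleus {p : List Bool → List Bool} (hp : p ∈ grigNucleus) (x : Bool) :
    restr p x ∈ grigNucleus := by
  rcases hp with rfl | rfl | rfl | rfl | rfl <;> cases x <;>
    simp [grigNucleus, restr_id, restr_grigA, restr_grigB, restr_grigC, restr_grigD]

theorem restrW_mem_grigNucleus {p : List Bool → List Bool} (hp : p ∈ grigNucleus)
    (v : List Bool) : restrW p v ∈ grigNucleus := by
  induction v generalizing p with
  | nil => exact hp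
  | cons x v ih => exact ih (restr_mem_grigNucleus hp x)

theorem restr_comp_mem_grigNucleus {p q : List Bool → List Bool} (hp : p ∈ grigNucleus)
    (hq : q ∈ grigNucleus) (x : Bool) : restr (p ∘ q) x ∈ grigNucleus := by
  have hK : ∀ {r}, r ∈ grigNucleus → r = grigA ∨ r ∈ grigKleinFour := by
    rintro r (rfl | rfl | rfl | rfl | rfl) <;> simp [grigKleinFour]
  rcases hK hp with rfl | hpK
  · convert restr_mem_grigNucleus hq x using 1
    funext w
    exact tail_grigA _
  rcases hK hq with rfl | hqK
  · exact restr_mem_grigNucleus hp (!x)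
  · rcases comp_mem_grigKleinFour hpK hqK with h | h | h | h <;> rw [h] <;>
      exact restr_mem_grigNucleus (by simp [grigNucleus]) x

theorem restrW_comp_mem_grigNucleus :
    ∀ p ∈ grigNucleus, ∀ q ∈ grigNucleus, ∀ v ≠ [], restrW (p ∘ q) v ∈ grigNucleus := by
  intro p hp q hq v hv
  obtain ⟨x, v, rfl⟩ := List.exists_cons_of_ne_nil hv
  exact restrW_mem_grigNucleus (restr_comp_mem_grigNucleus hp hq x) v

/-- The Grigorchuk group self-similar action on `X = {x,y}` is contracting with nucleus
`𝒩 = {e, a, b, c, d}`: for every `g` in the group generated by `a, b, c, d` there is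
`n` such that `g|_v ∈ {e, a, b, c, d}` for all words `v` with `|v| ≥ n`. -/
theorem grigorchuk_contracting :
    ∀ f ∈ Submonoid.closure ({grigA, grigB, grigC, grigD} : Set (Function.End (List Bool))),
      ∃ n : ℕ, ∀ v : List Bool, n ≤ v.length →
        restrW f v ∈ ({id, grigA, grigB, grigC, grigD} : Set (List Bool → List Bool)) := by
  intro f hf
  induction hf using Submonoid.closure_induction with
  | mem f hf =>
    refine ⟨0, fun v _ => restrW_mem_grigNucleus ?_ v⟩
    rcases hf with rfl | rfl | rfl | rfl <;> simp [grigNucleus]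
  | one => exact ⟨0, fun v _ => restrW_mem_grigNucleus (Or.inl rfl) v⟩
  | mul f g _ hg ihf ihg =>
    exact EventuallyRestrIn.mul restrW_comp_mem_grigNucleus ihf
      (closure_grig_le_binaryTreeEnd hg) ihg
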